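/- (Optimally tuned risks and monotonicity in the aspect ratio.) Let η_* := SNR_{μ₀}⁻¹ and OPT^#_{(Σ,μ₀)} := 𝓡^#_{(Σ,μ₀)}(η_*)/σ_ξ² for # ∈ {pred, est, ins}. Then: OPT^pred = φτ_{η_*,*}/η_* − 1, OPT^est = (1−φ)/η_* + 1/τ_{η_*,*}, OPT^ins = −η_*/τ_{η_*,*} + φ. Consequently: (1) OPT^est = SNR_{μ₀}·(1 − φ + φ/(OPT^pred + 1)) and OPT^ins = φ·OPT^pred/(OPT^pred + 1); and (2) viewing φ as a continuous parameter (with τ_{η_*,*} determined by the second fixed-point equation), ∂_φ OPT^pred ≤ 0, ∂_φ OPT^est ≤ 0, and ∂_φ OPT^ins ≥ 0. -/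

import Mathlib

noncomputable section

open MeasureTheory ProbabilityTheory Matrix Filter Set
open scoped Classical

namespace Ridge

/-- Euclidean norm on `Fin n → ℝ`. -/
def vnorm {n : ℕ} (x : Fin n → ℝ) : ℝ := Real.sqrt (∑ i, x i ^ 2)

/-- Sup-norm on `Fin n → ℝ`. -/
def vnormInf {n : ℕ} (x : Fin n → ℝ) : ℝ := ⨆ i, |x i|

/-- ℓ_q quasi-norm (real exponent `q ∈ (0,∞)`). -/
def vnormQ {n : ℕ} (q : ℝ) (x : Fin n → ℝ) : ℝ := (∑ i, |x i| ^ q) ^ (1 / q)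

/-- ℓ₂ → ℓ₂ operator norm of a matrix. -/
def opNorm {m n : ℕ} (A : Matrix (Fin m) (Fin n) ℝ) : ℝ :=
  sSup {r : ℝ | ∃ x : Fin n → ℝ, vnorm x ≤ 1 ∧ r = vnorm (A.mulVec x)}

/-- `H_Σ = tr(Σ⁻¹)/n`. -/
def HSigma {n : ℕ} (S : Matrix (Fin n) (Fin n) ℝ) : ℝ := Matrix.trace S⁻¹ / n

/-- `Ξ_K = [1_{φ⁻¹ < 1+1/K}·K⁻¹, K]` where `φ⁻¹ = n/m`. -/
def XiSet (m n : ℕ) (K : ℝ) : Set ℝ :=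
  Set.Icc (if (n : ℝ) / m < 1 + 1 / K then K⁻¹ else 0) K

/-- Euclidean ball of radius `R` in `ℝⁿ`. -/
def ball (n : ℕ) (R : ℝ) : Set (Fin n → ℝ) := {x | vnorm x ≤ R}

/-- `(Σ + τ I)⁻¹`. -/
def resolv {n : ℕ} (S : Matrix (Fin n) (Fin n) ℝ) (τ : ℝ) : Matrix (Fin n) (Fin n) ℝ :=
  (S + τ • (1 : Matrix (Fin n) (Fin n) ℝ))⁻¹

/-- `sqS` is the (unique) p.s.d. square root of the (invertible) covariance `S`. -/
def IsCovSqrt {n : ℕ} (S sqS : Matrix (Fin n) (Fin n) ℝ) : Prop :=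
  S.PosDef ∧ sqS.PosSemidef ∧ sqS * sqS = S

/-- `lam` enumerates the eigenvalues of `S` in decreasing order `λ₁ ≥ ⋯ ≥ λ_n`. -/
def IsEigenSeq {n : ℕ} (S : Matrix (Fin n) (Fin n) ℝ) (lam : Fin n → ℝ) : Prop :=
  S.charpoly = ∏ i : Fin n, (Polynomial.X - Polynomial.C (lam i)) ∧
    ∀ i j : Fin n, i ≤ j → lam j ≤ lam i

/-- Second fixed point equation: `φ - η/τ = n⁻¹ tr((Σ+τI)⁻¹Σ)`, with `τ > 0`. -/
def IsTauSol {n : ℕ} (m : ℕ) (S : Matrix (Fin n) (Fin n) ℝ) (η τ : ℝ) : Prop :=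
  0 < τ ∧ (m : ℝ) / n - η / τ = (n : ℝ)⁻¹ * Matrix.trace (resolv S τ * S)

/-- The fixed point equation (2.7); note that
`‖(Σ+τI)⁻¹Σ^{1/2}μ₀‖² = ⟪μ₀, (Σ+τI)⁻¹Σ(Σ+τI)⁻¹μ₀⟫`. -/
def IsFPESol {n : ℕ} (m : ℕ) (S : Matrix (Fin n) (Fin n) ℝ) (μ₀ : Fin n → ℝ)
    (σ η γ τ : ℝ) : Prop :=
  0 < γ ∧ IsTauSol m S η τ ∧
    (m : ℝ) / n * γ ^ 2
      = σ ^ 2 + τ ^ 2 * (μ₀ ⬝ᵥ (resolv S τ * S * resolv S τ).mulVec μ₀)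
        + γ ^ 2 * ((n : ℝ)⁻¹ * Matrix.trace (S * S * (resolv S τ * resolv S τ)))

/-- product of standard Gaussians on `ι → ℝ`. -/
def gaussianPi (ι : Type) [Fintype ι] : Measure (ι → ℝ) :=
  Measure.pi fun _ => ProbabilityTheory.gaussianReal 0 1

/-- Ridge estimator `μ̂^seq(γ;τ) = (Σ+τI)⁻¹Σ^{1/2}(Σ^{1/2}μ₀ + γ g/√n)` in the sequence model. -/
def muSeq {n : ℕ} (S sqS : Matrix (Fin n) (Fin n) ℝ) (μ₀ : Fin n → ℝ) (γ τ : ℝ)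
    (g : Fin n → ℝ) : Fin n → ℝ :=
  (resolv S τ * sqS).mulVec (sqS.mulVec μ₀ + (γ / Real.sqrt n) • g)

/-- `E 𝗀(μ̂^seq_{(Σ,μ₀)}(γ;τ))`, the expectation over `g ~ N(0, I_n)`. -/
def seqExp {n : ℕ} (S sqS : Matrix (Fin n) (Fin n) ℝ) (μ₀ : Fin n → ℝ) (γ τ : ℝ)
    (G : (Fin n → ℝ) → ℝ) : ℝ :=
  ∫ g, G (muSeq S sqS μ₀ γ τ g) ∂gaussianPi (Fin n)

/-- Ridge estimator `μ̂_η = (XᵀX/n + ηI)⁻¹XᵀY/n`, `η > 0`. -/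
def ridgePos {m n : ℕ} (X : Matrix (Fin m) (Fin n) ℝ) (Y : Fin m → ℝ) (η : ℝ) : Fin n → ℝ :=
  (((n : ℝ)⁻¹ • (Xᵀ * X) + η • (1 : Matrix (Fin n) (Fin n) ℝ))⁻¹).mulVec
    ((n : ℝ)⁻¹ • Xᵀ.mulVec Y)

/-- Ridge(less) estimator: for `η = 0` it is the minimum-ℓ₂-norm least squares solution
`(XᵀX)⁻XᵀY`, which equals the limit of `μ̂_η` as `η ↓ 0`. -/
def ridge {m n : ℕ} (X : Matrix (Fin m) (Fin n) ℝ) (Y : Fin m → ℝ) (η : ℝ) : Fin n → ℝ :=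
  if η = 0 then limUnder (nhdsWithin 0 (Set.Ioi (0 : ℝ))) fun t => ridgePos X Y t
  else ridgePos X Y η

/-- scaled residual `r̂_η = (Y - Xμ̂_η)/√n`. -/
def residHat {m n : ℕ} (X : Matrix (Fin m) (Fin n) ℝ) (Y : Fin m → ℝ) (η : ℝ) : Fin m → ℝ :=
  (Real.sqrt n)⁻¹ • (Y - X.mulVec (ridge X Y η))

/-- a mean-zero, unit-variance probability law on `ℝ` with sub-Gaussian tail constant `c`. -/
def SubGLaw (c : ℝ) (ν : Measure ℝ) : Prop :=
  IsProbabilityMeasure ν ∧ (∫ x, x ∂ν) = 0 ∧ (∫ x, x ^ 2 ∂ν) = 1 ∧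
    ∀ t : ℝ, 0 ≤ t → ν {x | t ≤ |x|} ≤ ENNReal.ofReal (2 * Real.exp (-t ^ 2 / c))

/-- Design assumption: independent, mean-zero, unit-variance, uniformly sub-Gaussian entries. -/
def IsSubGDesign {Ω : Type} [MeasurableSpace Ω] (P : Measure Ω) {m n : ℕ} (c : ℝ)
    (Z : Ω → Fin m → Fin n → ℝ) : Prop :=
  (∀ i j, Measurable fun ω => Z ω i j) ∧
    iIndepFun
      (fun (p : Fin m × Fin n) ω => Z ω p.1 p.2) P ∧
    ∀ i j, SubGLaw c (P.map fun ω => Z ω i j)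

/-- Gaussian design: i.i.d. `N(0,1)` entries. -/
def IsGaussDesign {Ω : Type} [MeasurableSpace Ω] (P : Measure Ω) {m n : ℕ}
    (Z : Ω → Fin m → Fin n → ℝ) : Prop :=
  (∀ i j, Measurable fun ω => Z ω i j) ∧
    P.map (fun ω => fun p : Fin m × Fin n => Z ω p.1 p.2) = gaussianPi (Fin m × Fin n)

/-- Noise assumption: i.i.d. mean-zero, unit-variance, uniformly sub-Gaussian entries. -/
def IsSubGNoise {Ω : Type} [MeasurableSpace Ω] (P : Measure Ω) {m : ℕ} (c : ℝ)
    (ξ₀ : Ω → Fin m → ℝ) : Prop :=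
  (∀ i, Measurable fun ω => ξ₀ ω i) ∧
    iIndepFun (fun (i : Fin m) ω => ξ₀ ω i) P ∧
    (∀ i j, P.map (fun ω => ξ₀ ω i) = P.map fun ω => ξ₀ ω j) ∧
    ∀ i, SubGLaw c (P.map fun ω => ξ₀ ω i)

/-- design matrix `X = Z Σ^{1/2}`. -/
def designX {m n : ℕ} (sqS : Matrix (Fin n) (Fin n) ℝ) (z : Fin m → Fin n → ℝ) :
    Matrix (Fin m) (Fin n) ℝ := Matrix.of z * sqS

/-- response `Y = X μ₀ + σ ξ₀`. -/
def respY {m n : ℕ} (sqS : Matrix (Fin n) (Fin n) ℝ) (μ₀ : Fin n → ℝ) (σ : ℝ)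
    (z : Fin m → Fin n → ℝ) (e : Fin m → ℝ) : Fin m → ℝ :=
  (designX sqS z).mulVec μ₀ + σ • e

/-- one-sided derivative on `[0,∞)`. -/
def dW (f : ℝ → ℝ) (η : ℝ) : ℝ := derivWithin f (Set.Ici (0 : ℝ)) η

/-- `m_η = 1/τ_{η,*}`. -/
def mmOf (τs : ℝ → ℝ) (η : ℝ) : ℝ := (τs η)⁻¹

/-- `m'_η = φ ∂_η τ_{η,*} / τ_{η,*}²`. -/
def mpOf (φ : ℝ) (τs : ℝ → ℝ) (η : ℝ) : ℝ := φ * dW τs η / τs η ^ 2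

/-- `φ·‖μ₀‖²·m_η - (η‖μ₀‖² - σ²)·m'_η`  (= σ²(φ·SNR·m_η - (η·SNR - 1)m'_η)). -/
def rmtCore (φ σ2 b2 η mm mp : ℝ) : ℝ := φ * b2 * mm - (η * b2 - σ2) * mp

/-- `𝓡^pred(η)`; note `σ²(η·SNR-1) = η‖μ₀‖² - σ²`, which also covers `σ = 0`. -/
def rmtPred (φ σ2 b2 η mm mp : ℝ) : ℝ := rmtCore φ σ2 b2 η mm mp / mm ^ 2 - σ2

/-- `𝓡^est(η)`. -/
def rmtEst (φ σ2 b2 η mm mp : ℝ) : ℝ :=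
  b2 * (1 - φ) + σ2 * mm + η / φ * (η * b2 - σ2) * mp

/-- `𝓡^ins(η)`. -/
def rmtIns (φ σ2 b2 η mm mp : ℝ) : ℝ :=
  η ^ 2 / φ * rmtCore φ σ2 b2 η mm mp + σ2 * (φ - 2 * η * mm)

/-- `𝓡^res(η)`. -/
def rmtRes (φ σ2 b2 η mm mp : ℝ) : ℝ := η ^ 2 / φ * rmtCore φ σ2 b2 η mm mp

def rmtPredFn (φ σ2 b2 : ℝ) (τs : ℝ → ℝ) : ℝ → ℝ :=
  fun η => rmtPred φ σ2 b2 η (mmOf τs η) (mpOf φ τs η)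

def rmtEstFn (φ σ2 b2 : ℝ) (τs : ℝ → ℝ) : ℝ → ℝ :=
  fun η => rmtEst φ σ2 b2 η (mmOf τs η) (mpOf φ τs η)

def rmtInsFn (φ σ2 b2 : ℝ) (τs : ℝ → ℝ) : ℝ → ℝ :=
  fun η => rmtIns φ σ2 b2 η (mmOf τs η) (mpOf φ τs η)

def rmtResFn (φ σ2 b2 : ℝ) (τs : ℝ → ℝ) : ℝ → ℝ :=
  fun η => rmtRes φ σ2 b2 η (mmOf τs η) (mpOf φ τs η)

/-- second fixed point equation with a real aspect-ratio parameter `φ`. -/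
def IsTauSolPhi {n : ℕ} (φ : ℝ) (S : Matrix (Fin n) (Fin n) ℝ) (η τ : ℝ) : Prop :=
  0 < τ ∧ φ - η / τ = (n : ℝ)⁻¹ * Matrix.trace (resolv S τ * S)

/-- `OPT^pred = 𝓡^pred(η_*)/σ²`, `η_* = σ²/‖μ₀‖²`. -/
def optPred (φ σ2 b2 : ℝ) (τs : ℝ → ℝ) : ℝ :=
  rmtPred φ σ2 b2 (σ2 / b2) (τs (σ2 / b2))⁻¹
    (φ * deriv τs (σ2 / b2) / τs (σ2 / b2) ^ 2) / σ2

/-- `OPT^est = 𝓡^est(η_*)/σ²`. -/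
def optEst (φ σ2 b2 : ℝ) (τs : ℝ → ℝ) : ℝ :=
  rmtEst φ σ2 b2 (σ2 / b2) (τs (σ2 / b2))⁻¹
    (φ * deriv τs (σ2 / b2) / τs (σ2 / b2) ^ 2) / σ2

/-- `OPT^ins = 𝓡^ins(η_*)/σ²`. -/
def optIns (φ σ2 b2 : ℝ) (τs : ℝ → ℝ) : ℝ :=
  rmtIns φ σ2 b2 (σ2 / b2) (τs (σ2 / b2))⁻¹
    (φ * deriv τs (σ2 / b2) / τs (σ2 / b2) ^ 2) / σ2

/-
At `η_* = SNR⁻¹` the factor `η·SNR - 1` multiplying `m'_η` vanishes, so the derivative of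
`τ_{η,*}` drops out of all three risks and what remains is algebra in `τ_* := τ_{η_*,*}`.

For the dependence on `φ`, let `df(τ) := n⁻¹ tr((Σ + τI)⁻¹Σ) = n⁻¹ ∑ᵢ λᵢ/(λᵢ + τ)`: it is
antitone in `τ`, while `τ·df(τ)` is monotone. The right-hand side of `φ = η/τ + df(τ)` is strictly
decreasing in `τ`, so `φ ↦ τ_*(φ)` is antitone, and
`OPT^pred = τ_*·df(τ_*)/η_*`, `OPT^est = (1 - df(τ_*))/η_*`, `OPT^ins = df(τ_*)`.
The signs of the derivatives follow from monotonicity alone, with no differentiability of `τ_*`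
in `φ` needed, since `deriv` of a non-differentiable function is `0`.
-/

end Ridge

namespace Matrix

lemma IsHermitian.trace_cfc {𝕜 ι : Type*} [RCLike 𝕜] [Fintype ι] [DecidableEq ι]
    {A : Matrix ι ι 𝕜} (hA : A.IsHermitian) (f : ℝ → ℝ) :
    (cfc f A).trace = ∑ i, (f (hA.eigenvalues i) : 𝕜) := by
  rw [hA.cfc_eq, IsHermitian.cfc, Unitary.conjStarAlgAut_apply, trace_mul_cycle]
  simp [trace_diagonal]

lemma PosSemidef.inv_add_smul_one_mul_self {ι : Type*} [Fintype ι] [DecidableEq ι]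
    {S : Matrix ι ι ℝ} (hS : S.PosSemidef) {τ : ℝ} (hτ : 0 < τ) :
    (S + τ • (1 : Matrix ι ι ℝ))⁻¹ * S = cfc (fun x => (x + τ)⁻¹ * x) S := by
  have hspec : ∀ x ∈ spectrum ℝ S, x + τ ≠ 0 := fun x hx => by
    rw [hS.isHermitian.spectrum_real_eq_range_eigenvalues] at hx
    obtain ⟨i, rfl⟩ := hx
    have := hS.eigenvalues_nonneg i
    positivity
  have hsa : IsSelfAdjoint S := hS.isHermitian
  have hcont (f : ℝ → ℝ) : ContinuousOn f (spectrum ℝ S) := S.finite_real_spectrum.continuousOn f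
  rw [cfc_mul _ _ S (hcont _) (hcont _), cfc_id' ℝ S hsa, cfc_inv (· + τ) S hspec (hcont _) hsa,
    cfc_add_const τ _ S (hcont _) hsa, cfc_id' ℝ S hsa, nonsing_inv_eq_ringInverse,
    Algebra.algebraMap_eq_smul_one]

end Matrix

namespace Ridge

def df {n : ℕ} (S : Matrix (Fin n) (Fin n) ℝ) (τ : ℝ) : ℝ :=
  (n : ℝ)⁻¹ * Matrix.trace (resolv S τ * S)

section DegreesOfFreedom

variable {n : ℕ} {S : Matrix (Fin n) (Fin n) ℝ}

lemma df_eq_sum (hS : S.PosSemidef) {τ : ℝ} (hτ : 0 < τ) :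
    df S τ =
      (n : ℝ)⁻¹ * ∑ i, hS.isHermitian.eigenvalues i / (hS.isHermitian.eigenvalues i + τ) := by
  rw [df, resolv, hS.inv_add_smul_one_mul_self hτ, hS.isHermitian.trace_cfc]
  simp only [RCLike.ofReal_real_eq_id, id, inv_mul_eq_div]

lemma antitoneOn_df (hS : S.PosSemidef) : AntitoneOn (df S) (Ioi 0) := by
  intro a (ha : 0 < a) b (hb : 0 < b) hab
  rw [df_eq_sum hS ha, df_eq_sum hS hb]
  gcongr with i
  · exact hS.eigenvalues_nonneg i
  · have := hS.eigenvalues_nonneg i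
    positivity

lemma monotoneOn_mul_df (hS : S.PosSemidef) : MonotoneOn (fun τ => τ * df S τ) (Ioi 0) := by
  intro a (ha : 0 < a) b (hb : 0 < b) hab
  dsimp only
  rw [df_eq_sum hS ha, df_eq_sum hS hb, mul_left_comm, mul_left_comm b, Finset.mul_sum _ _ a,
    Finset.mul_sum _ _ b]
  gcongr (n : ℝ)⁻¹ * ?_
  refine Finset.sum_le_sum fun i _ => ?_
  have hl := hS.eigenvalues_nonneg i
  rw [mul_div_assoc', mul_div_assoc', div_le_div_iff₀ (by positivity) (by positivity)]
  nlinarith [mul_le_mul_of_nonneg_right hab (mul_nonneg hl hl)]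

end DegreesOfFreedom

section AspectRatio

variable {n : ℕ} {S : Matrix (Fin n) (Fin n) ℝ} {η : ℝ} {T : ℝ → ℝ}

lemma IsTauSolPhi.sub_div_eq_df {φ τ : ℝ} (h : IsTauSolPhi φ S η τ) : φ - η / τ = df S τ := h.2

lemma antitoneOn_of_isTauSolPhi (hS : S.PosSemidef) (hη : 0 < η)
    (hT : ∀ p, 0 < p → IsTauSolPhi p S η (T p)) : AntitoneOn T (Ioi 0) := by
  intro a (ha : 0 < a) b (hb : 0 < b) hab
  by_contra! hlt
  have hdf : df S (T b) ≤ df S (T a) := antitoneOn_df hS (hT a ha).1 (hT b hb).1 hlt.le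
  have hdiv : η / T b < η / T a := div_lt_div_of_pos_left hη (hT a ha).1 hlt
  linarith [(hT a ha).sub_div_eq_df, (hT b hb).sub_div_eq_df]

variable (hS : S.PosSemidef) (hη : 0 < η) (hT : ∀ p, 0 < p → IsTauSolPhi p S η (T p))
include hS hη hT

lemma monotoneOn_df_comp : MonotoneOn (fun p => df S (T p)) (Ioi 0) :=
  (antitoneOn_df hS).comp (antitoneOn_of_isTauSolPhi hS hη hT) fun p hp => (hT p hp).1

lemma antitoneOn_mul_df_comp : AntitoneOn (fun p => T p * df S (T p)) (Ioi 0) :=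
  (monotoneOn_mul_df hS).comp_AntitoneOn (antitoneOn_of_isTauSolPhi hS hη hT)
    fun p hp => (hT p hp).1

lemma antitoneOn_optPred_phi : AntitoneOn (fun p => p * T p / η - 1) (Ioi 0) := by
  refine AntitoneOn.congr (f₁ := fun p => T p * df S (T p) / η)
    (fun a ha b hb hab => div_le_div_of_nonneg_right (antitoneOn_mul_df_comp hS hη hT ha hb hab)
      hη.le) fun p hp => ?_
  · have hTp := (hT p hp).1
    dsimp only
    rw [← (hT p hp).sub_div_eq_df]
    field_simp

lemma antitoneOn_optEst_phi : AntitoneOn (fun p => (1 - p) / η + (T p)⁻¹) (Ioi 0) := by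
  refine AntitoneOn.congr (f₁ := fun p => (1 - df S (T p)) / η)
    (fun a ha b hb hab => div_le_div_of_nonneg_right
      (sub_le_sub_left (monotoneOn_df_comp hS hη hT ha hb hab) 1) hη.le) fun p hp => ?_
  · have hTp := (hT p hp).1
    dsimp only
    rw [← (hT p hp).sub_div_eq_df]
    field_simp
    ring

lemma monotoneOn_optIns_phi : MonotoneOn (fun p => -η / T p + p) (Ioi 0) :=
  (monotoneOn_df_comp hS hη hT).congr fun p hp => by
    dsimp only
    rw [← (hT p hp).sub_div_eq_df]
    ring

end AspectRatio

section OptimalRisk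

variable {φ σ2 b2 : ℝ} (τs : ℝ → ℝ)

lemma optPred_eq (hσ2 : σ2 ≠ 0) (hb2 : b2 ≠ 0) (hτ : τs (σ2 / b2) ≠ 0) :
    optPred φ σ2 b2 τs = φ * τs (σ2 / b2) / (σ2 / b2) - 1 := by
  rw [optPred, rmtPred, rmtCore]
  field_simp
  ring

lemma optEst_eq (hσ2 : σ2 ≠ 0) (hb2 : b2 ≠ 0) :
    optEst φ σ2 b2 τs = (1 - φ) / (σ2 / b2) + (τs (σ2 / b2))⁻¹ := by
  rw [optEst, rmtEst]
  field_simp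
  ring

lemma optIns_eq (hφ : φ ≠ 0) (hσ2 : σ2 ≠ 0) (hb2 : b2 ≠ 0) (hτ : τs (σ2 / b2) ≠ 0) :
    optIns φ σ2 b2 τs = -(σ2 / b2) / τs (σ2 / b2) + φ := by
  rw [optIns, rmtIns, rmtCore]
  field_simp
  ring

end OptimalRisk

/-- optimally tuned risks and their monotonicity in the aspect ratio. -/
theorem statement_17 (m n : ℕ) (hm : 0 < m) (hn : 0 < n)
    (S : Matrix (Fin n) (Fin n) ℝ) (hS : S.PosDef)
    (μ₀ : Fin n → ℝ) (σ : ℝ) (hσ : 0 < σ) (hμ : 0 < vnorm μ₀)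
    (τs : ℝ → ℝ) (hτ : ∀ η : ℝ, 0 < η → IsTauSol m S η (τs η)) :
    optPred ((m : ℝ) / n) (σ ^ 2) (vnorm μ₀ ^ 2) τs
        = (m : ℝ) / n * τs (σ ^ 2 / vnorm μ₀ ^ 2) / (σ ^ 2 / vnorm μ₀ ^ 2) - 1 ∧
    optEst ((m : ℝ) / n) (σ ^ 2) (vnorm μ₀ ^ 2) τs
        = (1 - (m : ℝ) / n) / (σ ^ 2 / vnorm μ₀ ^ 2) +
            (τs (σ ^ 2 / vnorm μ₀ ^ 2))⁻¹ ∧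
    optIns ((m : ℝ) / n) (σ ^ 2) (vnorm μ₀ ^ 2) τs
        = -(σ ^ 2 / vnorm μ₀ ^ 2) / τs (σ ^ 2 / vnorm μ₀ ^ 2) + (m : ℝ) / n ∧
    optEst ((m : ℝ) / n) (σ ^ 2) (vnorm μ₀ ^ 2) τs
        = vnorm μ₀ ^ 2 / σ ^ 2 *
            (1 - (m : ℝ) / n +
              (m : ℝ) / n / (optPred ((m : ℝ) / n) (σ ^ 2) (vnorm μ₀ ^ 2) τs + 1)) ∧
    optIns ((m : ℝ) / n) (σ ^ 2) (vnorm μ₀ ^ 2) τs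
        = (m : ℝ) / n * optPred ((m : ℝ) / n) (σ ^ 2) (vnorm μ₀ ^ 2) τs /
            (optPred ((m : ℝ) / n) (σ ^ 2) (vnorm μ₀ ^ 2) τs + 1) ∧
    (∀ T : ℝ → ℝ,
      (∀ p : ℝ, 0 < p → IsTauSolPhi p S (σ ^ 2 / vnorm μ₀ ^ 2) (T p)) →
      ∀ p : ℝ, 0 < p →
        deriv (fun p' => p' * T p' / (σ ^ 2 / vnorm μ₀ ^ 2) - 1) p ≤ 0 ∧
        deriv (fun p' => (1 - p') / (σ ^ 2 / vnorm μ₀ ^ 2) + (T p')⁻¹) p ≤ 0 ∧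
        0 ≤ deriv (fun p' => -(σ ^ 2 / vnorm μ₀ ^ 2) / T p' + p') p) := by
  have hσ2 : σ ^ 2 ≠ 0 := by positivity
  have hb2 : vnorm μ₀ ^ 2 ≠ 0 := by positivity
  have hη : 0 < σ ^ 2 / vnorm μ₀ ^ 2 := by positivity
  have hτ₀ : τs (σ ^ 2 / vnorm μ₀ ^ 2) ≠ 0 := (hτ _ hη).1.ne'
  have hφ : (m : ℝ) / n ≠ 0 := div_ne_zero (by exact_mod_cast hm.ne') (by exact_mod_cast hn.ne')
  rw [optPred_eq τs hσ2 hb2 hτ₀, optEst_eq τs hσ2 hb2, optIns_eq τs hφ hσ2 hb2 hτ₀]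
  refine ⟨rfl, rfl, rfl, ?_, ?_, fun T hT p hp => ?_⟩
  · field_simp
    ring
  · field_simp
    ring
  · simp only [← derivWithin_of_isOpen isOpen_Ioi (mem_Ioi.2 hp)]
    exact ⟨(antitoneOn_optPred_phi hS.posSemidef hη hT).derivWithin_nonpos,
      (antitoneOn_optEst_phi hS.posSemidef hη hT).derivWithin_nonpos,
      (monotoneOn_optIns_phi hS.posSemidef hη hT).derivWithin_nonneg⟩

end Ridge
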